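/- arXiv:2205.08373 — 6 statements merged into one kernel-verified Lean document; each statement's English description precedes it below -/
import Mathlib

section
/- If α : (F,φ) → (G,ψ) and β : (G,ψ) → (K,χ) are morphisms of stock-flow diagrams (natural transformations satisfying the flow-function compatibility equation ψ_g = Σ_{f ∈ α(flow)^{-1}(g)} φ_f ∘ α(link)*), then the composite natural transformation β ∘ α also satisfies the compatibility equation χ_k = Σ_{f ∈ (β∘α)(flow)^{-1}(k)} φ_f ∘ ((β∘α)(link))*, so stock-flow diagrams and their morphisms form a category StockFlow. -/
open scoped Classical

/-- A stock-flow diagram: finite sets of stocks, flows and links, upstream/downstream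
maps, source/target maps for links, and a continuous flow function for each flow,
depending on the values indexed by the links targeting that flow. -/
structure StockFlow where
  S : Type
  F : Type
  L : Type
  [finS : Fintype S]
  [finF : Fintype F]
  [finL : Fintype L]
  u : F → S
  d : F → S
  s : L → S
  t : L → F
  φ : ∀ f : F, ({l : L // t l = f} → ℝ) → ℝ
  φ_cont : ∀ f, Continuous (φ f)

attribute [instance] StockFlow.finS StockFlow.finF StockFlow.finL

/-- A morphism of stock-flow diagrams: a natural transformation satisfying the
flow-function compatibility equation. -/
structure SFHom (A B : StockFlow) where
  αS : A.S → B.S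
  αF : A.F → B.F
  αL : A.L → B.L
  nat_u : ∀ f, B.u (αF f) = αS (A.u f)
  nat_d : ∀ f, B.d (αF f) = αS (A.d f)
  nat_s : ∀ l, B.s (αL l) = αS (A.s l)
  nat_t : ∀ l, B.t (αL l) = αF (A.t l)
  compat : ∀ g : B.F, ∀ y : {l : B.L // B.t l = g} → ℝ,
    B.φ g y = ∑ f : {f : A.F // αF f = g},
      A.φ f.1 (fun l => y ⟨αL l.1, by rw [nat_t, l.2]; exact f.2⟩)

/-- The vector field (differential equation semantics) of a stock-flow diagram. -/
noncomputable def vf (A : StockFlow) (x : A.S → ℝ) (σ : A.S) : ℝ :=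
  (∑ f : {f : A.F // A.d f = σ}, A.φ f.1 (fun l => x (A.s l.1)))
  - ∑ f : {f : A.F // A.u f = σ}, A.φ f.1 (fun l => x (A.s l.1))

/-- Pullback (precomposition) of real-valued functions. -/
def pullback {S T : Type} (f : S → T) (y : T → ℝ) : S → ℝ := fun σ => y (f σ)

/-- Pushforward (summation over fibers) of real-valued functions. -/
noncomputable def pushforward {S T : Type} [Fintype S] (f : S → T) (x : S → ℝ) : T → ℝ :=
  fun τ => ∑ σ : {σ : S // f σ = τ}, x σ.1

/-- the composite of two morphisms of stock-flow diagrams again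
satisfies the flow-function compatibility equation, so stock-flow diagrams form
a category. -/
theorem sfHom_comp_compat (A B C : StockFlow) (α : SFHom A B) (β : SFHom B C) :
    ∀ k : C.F, ∀ y : {l : C.L // C.t l = k} → ℝ,
      C.φ k y = ∑ f : {f : A.F // β.αF (α.αF f) = k},
        A.φ f.1 (fun l => y ⟨β.αL (α.αL l.1), by
          rw [β.nat_t, α.nat_t, l.2]; exact f.2⟩) := by
  intro k y
  rw [β.compat]
  simp_rw [α.compat]
  rw [Finset.sum_sigma']
  exact Fintype.sum_equiv
    (⟨fun p => ⟨p.2.1, by rw [p.2.2]; exact p.1.2⟩,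
      fun f => ⟨⟨α.αF f.1, f.2⟩, ⟨f.1, rfl⟩⟩,
      fun p => Sigma.ext (Subtype.ext p.2.2)
        ((Subtype.heq_iff_coe_eq (fun f' => by simp [p.2.2])).2 rfl),
      fun f => rfl⟩ :
      (Σ g : {g : B.F // β.αF g = k}, {f : A.F // α.αF f = g.1}) ≃
        {f : A.F // β.αF (α.αF f) = k})
    _ _ (fun p => rfl)
end

section
/- If α : (F,φ) → (G,ψ) is an isomorphism of stock-flow diagrams and β = α(stock) : F(stock) → G(stock), then the associated vector fields satisfy β_* ∘ v(F,φ) ∘ β* = v(G,ψ), so isomorphic stock-flow diagrams yield isomorphic dynamical systems. -/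
open scoped Classical

def fiberEquiv {X Y S T : Type}
    (aF : X → Y) (aS : S → T) (dA : X → S) (dB : Y → T)
    (hnat : ∀ f, dB (aF f) = aS (dA f)) (τ : T) :
    (Σ σ : {σ : S // aS σ = τ}, {f : X // dA f = σ.1})
      ≃ (Σ g : {g : Y // dB g = τ}, {f : X // aF f = g.1}) where
  toFun p := ⟨⟨aF p.2.1, by rw [hnat, p.2.2, p.1.2]⟩, ⟨p.2.1, rfl⟩⟩
  invFun p := ⟨⟨dA p.2.1, by rw [← hnat, p.2.2, p.1.2]⟩, ⟨p.2.1, rfl⟩⟩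
  left_inv := by
    rintro ⟨⟨σ, hσ⟩, f, hf⟩
    obtain rfl : dA f = σ := hf
    rfl
  right_inv := by
    rintro ⟨⟨g, hg⟩, f, hf⟩
    obtain rfl : aF f = g := hf
    rfl

lemma fiber_sum {X Y S T : Type} [Fintype X] [Fintype Y] [Fintype S]
    (aF : X → Y) (aS : S → T) (dA : X → S) (dB : Y → T)
    (hnat : ∀ f, dB (aF f) = aS (dA f)) (τ : T) (t : X → ℝ) :
    (∑ σ : {σ : S // aS σ = τ}, ∑ f : {f : X // dA f = σ.1}, t f.1)
      = ∑ g : {g : Y // dB g = τ}, ∑ f : {f : X // aF f = g.1}, t f.1 := by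
  calc (∑ σ : {σ : S // aS σ = τ}, ∑ f : {f : X // dA f = σ.1}, t f.1)
      = ∑ p : Σ σ : {σ : S // aS σ = τ}, {f : X // dA f = σ.1}, t p.2.1 := by
        rw [← Finset.univ_sigma_univ, Finset.sum_sigma]
    _ = ∑ p : Σ g : {g : Y // dB g = τ}, {f : X // aF f = g.1}, t p.2.1 :=
        Fintype.sum_equiv (fiberEquiv aF aS dA dB hnat τ) _ _ (fun p => rfl)
    _ = _ := by rw [← Finset.univ_sigma_univ, Finset.sum_sigma]

/-- an isomorphism of stock-flow diagrams (a morphism all of whose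
components are bijective) carries the vector field of the domain to that of the
codomain: `β_* ∘ v(F,φ) ∘ β* = v(G,ψ)` where `β = α(stock)`. -/
theorem vf_iso_invariant (A B : StockFlow) (α : SFHom A B)
    (hS : Function.Bijective α.αS) (hF : Function.Bijective α.αF)
    (hL : Function.Bijective α.αL) :
    (pushforward α.αS) ∘ (vf A) ∘ (pullback α.αS) = vf B := by
  funext x
  funext τ
  simp only [Function.comp_apply, pushforward, pullback, vf]
  rw [Finset.sum_sub_distrib]
  congr 1
  · rw [fiber_sum α.αF α.αS A.d B.d α.nat_d τ
      (fun f => A.φ f (fun l => x (α.αS (A.s l.1))))]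
    refine Finset.sum_congr rfl (fun g _ => ?_)
    rw [α.compat g.1 (fun l => x (B.s l.1))]
    refine Finset.sum_congr rfl (fun f _ => ?_)
    congr 1
    funext l
    rw [α.nat_s]
  · rw [fiber_sum α.αF α.αS A.u B.u α.nat_u τ
      (fun f => A.φ f (fun l => x (α.αS (A.s l.1))))]
    refine Finset.sum_congr rfl (fun g _ => ?_)
    rw [α.compat g.1 (fun l => x (B.s l.1))]
    refine Finset.sum_congr rfl (fun f _ => ?_)
    congr 1
    funext l
    rw [α.nat_s]
end

section
/- The disjoint union (coproduct) of two stock-flow diagrams (F,φ) and (F',φ') — taking disjoint unions of stocks, flows, and links, with flow functions inherited from the components — is again a stock-flow diagram, and the vector field of the disjoint union equals i_* ∘ v(F,φ) ∘ i* + i'_* ∘ v(F',φ') ∘ i'* where i, i' are the injections of the stock sets into their disjoint union. -/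
open scoped Classical

/-- The disjoint union of two stock-flow diagrams: disjoint unions of stocks,
flows and links, with flow functions inherited from the components. That this is
well-defined (in particular, that the inherited flow functions are continuous)
is part of STATEMENT 13. -/
noncomputable def sumSF (A B : StockFlow) : StockFlow where
  S := A.S ⊕ B.S
  F := A.F ⊕ B.F
  L := A.L ⊕ B.L
  u := Sum.map A.u B.u
  d := Sum.map A.d B.d
  s := Sum.map A.s B.s
  t := Sum.map A.t B.t
  φ := fun f =>
    match f with
    | Sum.inl f => fun y => A.φ f (fun l => y ⟨Sum.inl l.1, by simp [l.2]⟩)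
    | Sum.inr f => fun y => B.φ f (fun l => y ⟨Sum.inr l.1, by simp [l.2]⟩)
  φ_cont := fun f => by
    cases f with
    | inl f => exact (A.φ_cont f).comp (continuous_pi fun l => continuous_apply _)
    | inr f => exact (B.φ_cont f).comp (continuous_pi fun l => continuous_apply _)

theorem Fintype.sum_fiber_sumMap_inl {α β γ δ M : Type} [AddCommMonoid M]
    (g : α → γ) (h : β → δ) (c : γ) {_ : Fintype {f // Sum.map g h f = Sum.inl c}}
    {_ : Fintype {a // g a = c}} (F : α ⊕ β → M) :
    ∑ f : {f // Sum.map g h f = Sum.inl c}, F f = ∑ a : {a // g a = c}, F (Sum.inl a) := by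
  let e : {a // g a = c} → {f // Sum.map g h f = Sum.inl c} :=
    fun a => ⟨Sum.inl a.1, by simp [a.2]⟩
  refine (Fintype.sum_bijective e ⟨?_, ?_⟩ (fun a => F (Sum.inl a.1)) (fun f => F f.1)
    fun _ => rfl).symm
  · exact fun a a' haa' => Subtype.ext (Sum.inl_injective (congrArg Subtype.val haa'))
  · rintro ⟨a | b, hf⟩
    · exact ⟨⟨a, by simpa using hf⟩, rfl⟩
    · simp at hf

theorem Fintype.sum_fiber_sumMap_inr {α β γ δ M : Type} [AddCommMonoid M]
    (g : α → γ) (h : β → δ) (c : δ) {_ : Fintype {f // Sum.map g h f = Sum.inr c}}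
    {_ : Fintype {b // h b = c}} (F : α ⊕ β → M) :
    ∑ f : {f // Sum.map g h f = Sum.inr c}, F f = ∑ b : {b // h b = c}, F (Sum.inr b) := by
  let e : {b // h b = c} → {f // Sum.map g h f = Sum.inr c} :=
    fun b => ⟨Sum.inr b.1, by simp [b.2]⟩
  refine (Fintype.sum_bijective e ⟨?_, ?_⟩ (fun b => F (Sum.inr b.1)) (fun f => F f.1)
    fun _ => rfl).symm
  · exact fun b b' hbb' => Subtype.ext (Sum.inr_injective (congrArg Subtype.val hbb'))
  · rintro ⟨a | b, hf⟩
    · simp at hf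
    · exact ⟨⟨b, by simpa using hf⟩, rfl⟩

theorem pushforward_apply_of_injective {S T : Type} [Fintype S] {f : S → T}
    (hf : Function.Injective f) (x : S → ℝ) (σ : S) : pushforward f x (f σ) = x σ := by
  unfold pushforward
  exact Fintype.sum_eq_single (f := fun τ : {τ // f τ = f σ} => x τ.1) ⟨σ, rfl⟩
    fun τ hτ => absurd (Subtype.ext (hf τ.2)) hτ

theorem pushforward_apply_of_notMem_range {S T : Type} [Fintype S] {f : S → T} (x : S → ℝ)
    {τ : T} (hτ : τ ∉ Set.range f) : pushforward f x τ = 0 :=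
  Fintype.sum_eq_zero _ fun σ => (hτ ⟨σ.1, σ.2⟩).elim

/- The summands agree definitionally: a link into `Sum.inl f` is `Sum.inl` of a link into `f`. -/
theorem vf_sumSF_inl (A B : StockFlow) (x : A.S ⊕ B.S → ℝ) (a : A.S) :
    vf (sumSF A B) x (Sum.inl a) = vf A (pullback Sum.inl x) a :=
  let φx f := (sumSF A B).φ f fun l => x ((sumSF A B).s l.1)
  congrArg₂ (· - ·) (Fintype.sum_fiber_sumMap_inl A.d B.d a φx)
    (Fintype.sum_fiber_sumMap_inl A.u B.u a φx)

theorem vf_sumSF_inr (A B : StockFlow) (x : A.S ⊕ B.S → ℝ) (b : B.S) :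
    vf (sumSF A B) x (Sum.inr b) = vf B (pullback Sum.inr x) b :=
  let φx f := (sumSF A B).φ f fun l => x ((sumSF A B).s l.1)
  congrArg₂ (· - ·) (Fintype.sum_fiber_sumMap_inr A.d B.d b φx)
    (Fintype.sum_fiber_sumMap_inr A.u B.u b φx)

/-- the vector field of the disjoint union of two stock-flow
diagrams is `i_* ∘ v(F,φ) ∘ i* + i'_* ∘ v(F',φ') ∘ i'*`, where `i, i'` are the
injections of the stock sets into their disjoint union. -/
theorem vf_sumSF (A B : StockFlow) :
    vf (sumSF A B) = fun x =>
      pushforward (Sum.inl : A.S → A.S ⊕ B.S) (vf A (pullback Sum.inl x))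
      + pushforward (Sum.inr : B.S → A.S ⊕ B.S) (vf B (pullback Sum.inr x)) := by
  funext x σ
  cases σ with
  | inl a =>
    rw [Pi.add_apply, pushforward_apply_of_injective Sum.inl_injective,
      pushforward_apply_of_notMem_range _ (by simp), add_zero]
    exact vf_sumSF_inl A B x a
  | inr b =>
    rw [Pi.add_apply, pushforward_apply_of_injective Sum.inr_injective,
      pushforward_apply_of_notMem_range _ (by simp), zero_add]
    exact vf_sumSF_inr A B x b
end

section
/- For any continuous vector field v : ℝ^S → ℝ^S on a finite set S and any initial condition x₀ ∈ ℝ^S, there exists ε > 0 and a differentiable function x : (−ε, ε) → ℝ^S with x(0) = x₀ and x'(t) = v(x(t)) for all t ∈ (−ε, ε). -/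
/-!
Regularise `v` on the compact ball `B = closedBall x₀ 1`: componentwise, the inf-convolutions
`x ↦ min M (⨅ z ∈ B, v z i + n * dist x z)`, with `M` a bound of `‖v‖` on `B`, are Lipschitz,
bounded by `M`, and converge to `v` uniformly on `B`. Picard–Lindelöf solves `g' = W_n g` on
`[-T, T]` for these approximants `W_n`, with `T = 1 / (M + 1)` independent of `n`. The solutions
are `M`-Lipschitz and stay in `B`, so Arzelà–Ascoli extracts a uniformly convergent subsequence,
and dominated convergence passes to the limit in `g_n t = x₀ + ∫₀ᵗ W_n (g_n s) ds`.
-/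

open Set Filter Metric MeasureTheory
open scoped Topology NNReal

section InfConv

variable {α : Type*} [PseudoMetricSpace α] {K : Set α} {f : α → ℝ}

noncomputable def infConv (K : Set α) (f : α → ℝ) (c : ℝ≥0) (x : α) : ℝ :=
  ⨅ z : K, f z + c * dist x z

lemma bddBelow_range_add_mul_dist (hf : BddBelow (f '' K)) (c : ℝ≥0) (x : α) :
    BddBelow (range fun z : K => f z + c * dist x z) := by
  obtain ⟨m, hm⟩ := hf
  refine ⟨m, ?_⟩
  rintro _ ⟨z, rfl⟩
  exact le_add_of_le_of_nonneg (hm (mem_image_of_mem f z.2)) (by positivity)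

lemma infConv_le (hf : BddBelow (f '' K)) (c : ℝ≥0) {x : α} (hx : x ∈ K) :
    infConv K f c x ≤ f x := by
  simpa [infConv] using ciInf_le (bddBelow_range_add_mul_dist hf c x) ⟨x, hx⟩

lemma le_infConv (hK : K.Nonempty) {m : ℝ} (hm : ∀ z ∈ K, m ≤ f z) (c : ℝ≥0) (x : α) :
    m ≤ infConv K f c x :=
  have := hK.to_subtype
  le_ciInf fun z => le_add_of_le_of_nonneg (hm z z.2) (by positivity)

lemma lipschitzWith_infConv (hK : K.Nonempty) (hf : BddBelow (f '' K)) (c : ℝ≥0) :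
    LipschitzWith c (infConv K f c) := by
  have := hK.to_subtype
  refine LipschitzWith.of_le_add_mul c fun x y => ?_
  rw [← sub_le_iff_le_add]
  refine le_ciInf fun z => ?_
  rw [sub_le_iff_le_add]
  calc infConv K f c x ≤ f z + c * dist x z := ciInf_le (bddBelow_range_add_mul_dist hf c x) z
    _ ≤ f z + c * dist y z + c * dist x y := by
      rw [add_assoc, ← mul_add, add_comm (dist y z)]
      gcongr
      exact dist_triangle x y z

/-- Points `z` far from `x` are penalised by `c * dist x z`, and near ones differ little in value
by uniform continuity of `f` on `K`. -/
lemma tendstoUniformlyOn_infConv (hK : IsCompact K) (hf : ContinuousOn f K) :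
    TendstoUniformlyOn (infConv K f) f atTop K := by
  rcases K.eq_empty_or_nonempty with rfl | hne
  · exact tendstoUniformlyOn_empty
  obtain ⟨M, hM⟩ := hK.exists_bound_of_continuousOn hf
  have hbdd : BddBelow (f '' K) := hK.bddBelow_image hf
  rw [Metric.tendstoUniformlyOn_iff]
  intro ε hε
  obtain ⟨δ, hδ, hfδ⟩ := Metric.uniformContinuousOn_iff.mp
    (hK.uniformContinuousOn_of_continuous hf) (ε / 2) (half_pos hε)
  filter_upwards [eventually_ge_atTop (Real.toNNReal (2 * M / δ))] with c hc x hx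
  have hcδ : 2 * M ≤ c * δ := by
    rw [Real.toNNReal_le_iff_le_coe, div_le_iff₀ hδ] at hc
    exact hc
  have hlower : f x - ε / 2 ≤ infConv K f c x := by
    have := hne.to_subtype
    refine le_ciInf fun z => ?_
    have hfx := abs_le.mp (hM x hx)
    have hfz := abs_le.mp (hM z z.2)
    rcases lt_or_ge (dist x z) δ with hxz | hxz
    · have := hfδ x hx z z.2 hxz
      rw [Real.dist_eq, abs_lt] at this
      have : 0 ≤ (c : ℝ) * dist x z := by positivity
      linarith
    · have : (c : ℝ) * δ ≤ c * dist x z := by gcongr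
      linarith
  rw [Real.dist_eq, abs_sub_lt_iff]
  constructor <;> linarith [infConv_le hbdd c hx]

end InfConv

section LipschitzApprox

variable {α ι : Type*} [PseudoMetricSpace α] [Fintype ι]

theorem exists_lipschitzWith_tendstoUniformlyOn {K : Set α} (hK : IsCompact K)
    (hne : K.Nonempty) {f : α → ι → ℝ} (hf : ContinuousOn f K) {M : ℝ≥0}
    (hM : ∀ x ∈ K, ‖f x‖ ≤ M) :
    ∃ W : ℕ → α → ι → ℝ, (∀ n : ℕ, LipschitzWith n (W n)) ∧ (∀ n x, ‖W n x‖ ≤ M) ∧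
      TendstoUniformlyOn W f atTop K := by
  have hfi : ∀ i, ContinuousOn (f · i) K := fun i => (continuous_apply i).comp_continuousOn hf
  have hbound : ∀ i, ∀ z ∈ K, |f z i| ≤ M := fun i z hz =>
    (norm_le_pi_norm (f z) i).trans (hM z hz)
  -- truncating from above keeps the approximants bounded away from `K`
  refine ⟨fun n x i => min (M : ℝ) (infConv K (f · i) n x), fun n => ?_, fun n x => ?_, ?_⟩
  · refine LipschitzWith.of_dist_le_mul fun x y => (dist_pi_le_iff (by positivity)).2 fun i => ?_
    exact ((lipschitzWith_infConv hne (hK.bddBelow_image (hfi i)) n).const_min _).dist_le_mul x y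
  · refine (pi_norm_le_iff_of_nonneg M.2).2 fun i => abs_le.2 ⟨?_, min_le_left _ _⟩
    exact le_min (by simp) (le_infConv hne (fun z hz => (abs_le.1 (hbound i z hz)).1) n x)
  · rw [Metric.tendstoUniformlyOn_iff]
    intro ε hε
    have hi : ∀ i, ∀ᶠ n : ℕ in atTop, ∀ x ∈ K, dist (f x i) (infConv K (f · i) n x) < ε / 2 :=
      fun i => tendsto_natCast_atTop_atTop.eventually <| Metric.tendstoUniformlyOn_iff.mp
        (tendstoUniformlyOn_infConv hK (hfi i)) (ε / 2) (half_pos hε)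
    filter_upwards [eventually_all.mpr hi] with n hn x hx
    refine (dist_pi_lt_iff hε).2 fun i => ?_
    have hle : infConv K (f · i) n x ≤ M :=
      (infConv_le (hK.bddBelow_image (hfi i)) n hx).trans (abs_le.1 (hbound i x hx)).2
    rw [min_eq_right hle]
    exact (hn i x hx).trans (half_lt_self hε)

end LipschitzApprox

theorem exists_subseq_tendstoUniformly_of_lipschitzWith {X Y : Type*} [PseudoMetricSpace X]
    [CompactSpace X] [MetricSpace Y] {K : Set Y} (hK : IsCompact K) {L : ℝ≥0} {F : ℕ → X → Y}
    (hFK : ∀ n x, F n x ∈ K) (hF : ∀ n, LipschitzWith L (F n)) :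
    ∃ G : X → Y, ∃ φ : ℕ → ℕ, StrictMono φ ∧ TendstoUniformly (fun n => F (φ n)) G atTop := by
  let B : ℕ → BoundedContinuousFunction X Y := fun n =>
    BoundedContinuousFunction.mkOfCompact ⟨F n, (hF n).continuous⟩
  have hB : IsCompact (closure (range B)) := by
    refine BoundedContinuousFunction.arzela_ascoli K hK _ ?_ ?_
    · rintro _ x ⟨n, rfl⟩
      exact hFK n x
    · refine (LipschitzWith.uniformEquicontinuous _ L ?_).equicontinuous
      rintro ⟨_, n, rfl⟩
      exact hF n
  obtain ⟨G, -, φ, hφ, hG⟩ := hB.tendsto_subseq fun n => subset_closure (mem_range_self n)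
  exact ⟨G, φ, hφ, BoundedContinuousFunction.tendsto_iff_tendstoUniformly.1 hG⟩

section ODE

variable {E : Type*} [NormedAddCommGroup E] [NormedSpace ℝ E]

theorem exists_lipschitzOnWith_eq_integral [CompleteSpace E] {W : E → E} {K L : ℝ≥0}
    (hW : LipschitzWith K W) (hWL : ∀ x, ‖W x‖ ≤ L) (x₀ : E) {T : ℝ} (hT : 0 ≤ T) :
    ∃ g : ℝ → E, LipschitzOnWith L g (Icc (-T) T) ∧ MapsTo g (Icc (-T) T) (closedBall x₀ (L * T)) ∧
      ∀ t ∈ Icc (-T) T, g t = x₀ + ∫ s in (0 : ℝ)..t, W (g s) := by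
  have h0 : (0 : ℝ) ∈ Icc (-T) T := ⟨by linarith, hT⟩
  have hPL : IsPicardLindelof (fun _ => W) (⟨0, h0⟩ : Icc (-T) T) x₀ ⟨L * T, by positivity⟩ 0 L K :=
    .of_time_independent (fun x _ => hWL x) hW.lipschitzOnWith (by simp; exact le_rfl)
  obtain ⟨g, hg0, hg⟩ := hPL.exists_eq_forall_mem_Icc_hasDerivWithinAt₀
  have hg_lip : LipschitzOnWith L g (Icc (-T) T) :=
    (convex_Icc _ _).lipschitzOnWith_of_nnnorm_hasDerivWithin_le hg
      fun t _ => by exact_mod_cast hWL (g t)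
  refine ⟨g, hg_lip, fun t ht => ?_, fun t ht => ?_⟩
  · calc dist (g t) x₀ = dist (g t) (g 0) := by rw [← hg0]
      _ ≤ L * dist t 0 := hg_lip.dist_le_mul t ht 0 h0
      _ ≤ L * T := by gcongr; rw [Real.dist_0_eq_abs]; exact abs_le.2 ht
  have hsub : uIcc 0 t ⊆ Icc (-T) T := uIcc_subset_Icc h0 ht
  have hcont : ContinuousOn g (uIcc 0 t) := hg_lip.continuousOn.mono hsub
  have hint := intervalIntegral.integral_eq_sub_of_hasDeriv_right (f' := fun s => W (g s)) hcont
    (fun s hs => ?_) ((hW.continuous.comp_continuousOn hcont).intervalIntegrable)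
  · rw [hint, hg0, add_sub_cancel]
  · have hs' : s ∈ Ioo (-T) T := Ioo_subset_Ioo (le_min h0.1 ht.1) (max_le h0.2 ht.2) hs
    exact ((hg s (Ioo_subset_Icc_self hs')).hasDerivAt (Icc_mem_nhds hs'.1 hs'.2)).hasDerivWithinAt

theorem hasDerivAt_of_eqOn_integral [CompleteSpace E] {f x : ℝ → E} (hf : Continuous f) {x₀ : E}
    {U : Set ℝ} (hx : ∀ s ∈ U, x s = x₀ + ∫ τ in (0 : ℝ)..s, f τ) {t : ℝ} (hU : U ∈ 𝓝 t) :
    HasDerivAt x (f t) t :=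
  ((hf.integral_hasStrictDerivAt 0 t).hasDerivAt.const_add x₀).congr_of_eventuallyEq
    (eventually_of_mem hU hx)

theorem tendsto_intervalIntegral_comp_of_tendstoUniformlyOn {X : Type*} [TopologicalSpace X]
    {ι : Type*} {l : Filter ι} [l.IsCountablyGenerated] {W : ι → X → E} {w : X → E}
    {K : Set X} (hWw : TendstoUniformlyOn W w l K) (hw : Continuous w)
    (hW : ∀ i, Continuous (W i)) {M : ℝ} (hWM : ∀ i y, ‖W i y‖ ≤ M)
    {g : ι → ℝ → X} {x : ℝ → X} {a b : ℝ} (hg : ∀ i, ContinuousOn (g i) (uIcc a b))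
    (hgK : ∀ i, ∀ s ∈ uIcc a b, g i s ∈ K)
    (hgx : ∀ s ∈ uIcc a b, Tendsto (fun i => g i s) l (𝓝 (x s))) :
    Tendsto (fun i => ∫ s in a..b, W i (g i s)) l (𝓝 (∫ s in a..b, w (x s))) := by
  refine intervalIntegral.tendsto_integral_filter_of_dominated_convergence (fun _ => M)
    (Eventually.of_forall fun i => ?_)
    (Eventually.of_forall fun i => ae_of_all _ fun s _ => hWM i _)
    intervalIntegrable_const (ae_of_all _ fun s hs => ?_)
  · exact (((hW i).comp_continuousOn (hg i)).mono uIoc_subset_uIcc).aestronglyMeasurable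
      measurableSet_uIoc
  · have hs' := uIoc_subset_uIcc hs
    exact hWw.tendsto_comp hw.continuousWithinAt
      (tendsto_nhdsWithin_iff.2 ⟨hgx s hs', Eventually.of_forall fun i => hgK i s hs'⟩)

theorem exists_continuous_eq_integral_of_tendstoUniformlyOn [CompleteSpace E] {v : E → E}
    (hv : Continuous v) {W : ℕ → E → E} (hW : ∀ n, Continuous (W n)) {M : ℝ≥0}
    (hWM : ∀ n y, ‖W n y‖ ≤ M) {K : Set E} (hK : IsCompact K) (hWv : TendstoUniformlyOn W v atTop K)
    {x₀ : E} {T : ℝ} (hT : 0 ≤ T) {g : ℕ → ℝ → E}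
    (hg_lip : ∀ n, LipschitzOnWith M (g n) (Icc (-T) T))
    (hgK : ∀ n, MapsTo (g n) (Icc (-T) T) K)
    (hg_int : ∀ n, ∀ t ∈ Icc (-T) T, g n t = x₀ + ∫ s in (0 : ℝ)..t, W n (g n s)) :
    ∃ x : ℝ → E, Continuous x ∧ ∀ t ∈ Icc (-T) T, x t = x₀ + ∫ s in (0 : ℝ)..t, v (x s) := by
  obtain ⟨G, φ, hφ, hG⟩ := exists_subseq_tendstoUniformly_of_lipschitzWith hK
    (F := fun n (t : Icc (-T) T) => g n t) (fun n t => hgK n t.2) fun n => (hg_lip n).to_restrict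
  set x : ℝ → E := fun t => G (projIcc (-T) T (by linarith) t)
  have hgx : ∀ t ∈ Icc (-T) T, Tendsto (fun n => g (φ n) t) atTop (𝓝 (x t)) := fun t ht => by
    simpa [x, projIcc_of_mem _ ht] using hG.tendsto_at ⟨t, ht⟩
  refine ⟨x, (hG.continuous (Frequently.of_forall fun n =>
    (hg_lip (φ n)).to_restrict.continuous)).comp continuous_projIcc, fun t ht => ?_⟩
  have hsub : uIcc 0 t ⊆ Icc (-T) T := uIcc_subset_Icc ⟨by linarith, hT⟩ ht
  refine tendsto_nhds_unique (hgx t ht) <| ((tendsto_intervalIntegral_comp_of_tendstoUniformlyOn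
    (fun u hu => hφ.tendsto_atTop.eventually (hWv u hu)) hv (fun n => hW (φ n))
    (fun n => hWM (φ n)) (fun n => (hg_lip (φ n)).continuousOn.mono hsub)
    (fun n s hs => hgK (φ n) (hsub hs)) fun s hs => hgx s (hsub hs)).const_add x₀).congr fun n => ?_
  exact (hg_int (φ n) t ht).symm

end ODE

/-- Peano existence: any continuous vector field on `ℝ^S`, `S` a
finite set, has a local solution through any initial condition. -/
theorem peano_existence (S : Type) [Fintype S]
    (v : (S → ℝ) → S → ℝ) (hv : Continuous v) (x₀ : S → ℝ) :
    ∃ ε > (0 : ℝ), ∃ x : ℝ → S → ℝ, x 0 = x₀ ∧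
      ∀ t ∈ Set.Ioo (-ε) ε, HasDerivAt x (v (x t)) t := by
  have hK := isCompact_closedBall x₀ 1
  obtain ⟨M, hM⟩ : ∃ M : ℝ≥0, ∀ y ∈ closedBall x₀ 1, ‖v y‖ ≤ M := by
    obtain ⟨C, hC⟩ := hK.exists_bound_of_continuousOn hv.continuousOn
    exact ⟨C.toNNReal, fun y hy => (hC y hy).trans C.le_coe_toNNReal⟩
  obtain ⟨W, hW_lip, hWM, hWv⟩ := exists_lipschitzWith_tendstoUniformlyOn hK
    (nonempty_closedBall.2 zero_le_one) hv.continuousOn hM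
  set T : ℝ := 1 / (M + 1)
  have hT : 0 < T := by positivity
  have hMT : M * T ≤ 1 := by
    rw [mul_one_div, div_le_one (by positivity)]
    linarith
  choose g hg_lip hg_ball hg_int using
    fun n => exists_lipschitzOnWith_eq_integral (hW_lip n) (hWM n) x₀ hT.le
  obtain ⟨x, hx, hx_int⟩ := exists_continuous_eq_integral_of_tendstoUniformlyOn hv
    (fun n => (hW_lip n).continuous) hWM hK hWv hT.le hg_lip
    (fun n => (hg_ball n).mono_right (closedBall_subset_closedBall hMT)) hg_int
  exact ⟨T, hT, x, by simpa using hx_int 0 ⟨by linarith, hT.le⟩,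
    fun t ht => hasDerivAt_of_eqOn_integral (hv.comp hx) hx_int (Icc_mem_nhds ht.1 ht.2)⟩
end

section
/- Let C : FinSet → Set send a finite set S to the set of isomorphism classes of stock-flow diagrams with stock set S (isomorphisms fixing S pointwise), and let a function h : S → S' act by pushing forward a stock-flow diagram along h (relabeling stocks of the diagram via h, keeping flows, links, and flow functions). Then C is a well-defined functor: the action respects isomorphism classes, preserves identities, and preserves composition. -/
open scoped Classical

/-- A stock-flow diagram with a fixed set of stocks `S`. -/
structure SFOn (S : Type) where
  F : Type
  L : Type
  [finF : Fintype F]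
  [finL : Fintype L]
  u : F → S
  d : F → S
  s : L → S
  t : L → F
  φ : ∀ f : F, ({l : L // t l = f} → ℝ) → ℝ
  φ_cont : ∀ f, Continuous (φ f)

attribute [instance] SFOn.finF SFOn.finL

/-- Pushing a stock-flow diagram forward along `h : S → S'`: relabel the stocks
via `h`, keeping the flows, links and flow functions. -/
def pushSF {S S' : Type} (h : S → S') (A : SFOn S) : SFOn S' where
  F := A.F
  L := A.L
  u := h ∘ A.u
  d := h ∘ A.d
  s := h ∘ A.s
  t := A.t
  φ := A.φ
  φ_cont := A.φ_cont

/-- An isomorphism of stock-flow diagrams fixing the stock set pointwise: a pair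
of bijections on flows and links commuting with all structure maps and
satisfying the flow-function compatibility equation. -/
structure SFOnIso {S : Type} (A B : SFOn S) where
  bF : A.F ≃ B.F
  bL : A.L ≃ B.L
  comm_u : ∀ f, B.u (bF f) = A.u f
  comm_d : ∀ f, B.d (bF f) = A.d f
  comm_s : ∀ l, B.s (bL l) = A.s l
  comm_t : ∀ l, B.t (bL l) = bF (A.t l)
  compat : ∀ f : A.F, ∀ y : {l : B.L // B.t l = bF f} → ℝ,
    B.φ (bF f) y = A.φ f (fun l => y ⟨bL l.1, by rw [comm_t, l.2]⟩)

/-- The isomorphism relation on stock-flow diagrams with stock set `S`. -/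
def SFOnRel {S : Type} (A B : SFOn S) : Prop := Nonempty (SFOnIso A B)

def SFOnIso.refl {S : Type} (A : SFOn S) : SFOnIso A A where
  bF := Equiv.refl _
  bL := Equiv.refl _
  comm_u _ := rfl
  comm_d _ := rfl
  comm_s _ := rfl
  comm_t _ := rfl
  compat _ _ := rfl

def SFOnIso.map {S S' : Type} {A B : SFOn S} (h : S → S') (e : SFOnIso A B) :
    SFOnIso (pushSF h A) (pushSF h B) where
  bF := e.bF
  bL := e.bL
  comm_u f := congrArg h (e.comm_u f)
  comm_d f := congrArg h (e.comm_d f)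
  comm_s l := congrArg h (e.comm_s l)
  comm_t := e.comm_t
  compat := e.compat

-- Both isomorphisms are `refl`: the two sides agree definitionally, since `id ∘ u` and
-- `(g ∘ h) ∘ u` unfold to `u` and `g ∘ (h ∘ u)`.
def pushSFIdIso {S : Type} (A : SFOn S) : SFOnIso (pushSF id A) A :=
  SFOnIso.refl A

def pushSFCompIso {S S' S'' : Type} (h : S → S') (g : S' → S'') (A : SFOn S) :
    SFOnIso (pushSF (g ∘ h) A) (pushSF g (pushSF h A)) :=
  SFOnIso.refl _

/-- the assignment `C` sending `S` to the set of isomorphism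
classes of stock-flow diagrams with stock set `S`, with a function `h : S → S'`
acting by relabeling stocks, is a well-defined functor `FinSet → Set`: the
action respects the isomorphism relation, preserves identities and preserves
composition (up to isomorphism, i.e. as maps of isomorphism classes). -/
theorem C_functor (S S' S'' : Type) :
    (∀ (h : S → S') (A B : SFOn S), SFOnRel A B → SFOnRel (pushSF h A) (pushSF h B)) ∧
    (∀ A : SFOn S, SFOnRel (pushSF (id : S → S) A) A) ∧
    (∀ (h : S → S') (g : S' → S'') (A : SFOn S),
      SFOnRel (pushSF (g ∘ h) A) (pushSF g (pushSF h A))) :=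
  ⟨fun h _ _ ⟨e⟩ => ⟨e.map h⟩, fun A => ⟨pushSFIdIso A⟩, fun h g A => ⟨pushSFCompIso h g A⟩⟩
end

section
/- The assignment sending an isomorphism class of stock-flow diagrams with stock set S to the isomorphism class of the vector field v(F,φ) on ℝ^S defines a natural transformation θ : C ⇒ D of functors FinSet → Set: for any function h : S → S' and any stock-flow diagram (F,φ) with stocks S, the vector field of the pushed-forward diagram h·(F,φ) equals h_* ∘ v(F,φ) ∘ h*. -/
open scoped Classical

/-- The vector field semantics of a stock-flow diagram with stock set `S`. -/
noncomputable def vfOn {S : Type} (A : SFOn S) (x : S → ℝ) (σ : S) : ℝ :=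
  (∑ f : {f : A.F // A.d f = σ}, A.φ f.1 (fun l => x (A.s l.1)))
  - ∑ f : {f : A.F // A.u f = σ}, A.φ f.1 (fun l => x (A.s l.1))

lemma iso_sum {S : Type} (A B : SFOn S) (e : SFOnIso A B) (x : S → ℝ) (σ : S)
    (dA : A.F → S) (dB : B.F → S) (hcomm : ∀ f, dB (e.bF f) = dA f) :
    ∑ f : {f : B.F // dB f = σ}, B.φ f.1 (fun l => x (B.s l.1))
      = ∑ f : {f : A.F // dA f = σ}, A.φ f.1 (fun l => x (A.s l.1)) := by
  refine (Fintype.sum_equiv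
    (⟨fun f => ⟨e.bF f.1, by rw [hcomm, f.2]⟩,
      fun f => ⟨e.bF.symm f.1, by
        have := hcomm (e.bF.symm f.1); rw [Equiv.apply_symm_apply] at this
        rw [← this, f.2]⟩,
      fun f => Subtype.ext (e.bF.symm_apply_apply f.1),
      fun f => Subtype.ext (e.bF.apply_symm_apply f.1)⟩)
    _ _ ?_).symm
  intro f
  show A.φ f.1 _ = B.φ (e.bF f.1) _
  rw [e.compat f.1]
  congr 1
  funext l
  rw [e.comm_s]

lemma fiber_sum_s18 {F S S' : Type} [Fintype F] [Fintype S] (d : F → S) (h : S → S')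
    (σ' : S') (g : F → ℝ) :
    ∑ f : {f : F // h (d f) = σ'}, g f.1
      = ∑ σ : {σ : S // h σ = σ'}, ∑ f : {f : F // d f = σ.1}, g f.1 := by
  classical
  rw [← Fintype.sum_fiberwise
    (fun f : {f : F // h (d f) = σ'} => (⟨d f.1, f.2⟩ : {σ : S // h σ = σ'}))
    (fun f => g f.1)]
  refine Finset.sum_congr rfl fun σ _ => ?_
  refine Fintype.sum_equiv
    (⟨fun p => ⟨p.1.1, congrArg Subtype.val p.2⟩,
      fun f => ⟨⟨f.1, by rw [f.2]; exact σ.2⟩, Subtype.ext f.2⟩,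
      fun p => Subtype.ext (Subtype.ext rfl),
      fun f => rfl⟩) _ _ (fun p => rfl)

/-- the semantics `(F,φ) ↦ v(F,φ)` is constant on isomorphism
classes and defines a natural transformation `θ : C ⇒ D`: the vector field of
the pushed-forward diagram `h·(F,φ)` equals `h_* ∘ v(F,φ) ∘ h*`. -/
theorem theta_natural (S S' : Type) [Fintype S] [Fintype S'] :
    (∀ A B : SFOn S, SFOnRel A B → vfOn A = vfOn B) ∧
    (∀ (h : S → S') (A : SFOn S),
      vfOn (pushSF h A) = (pushforward h) ∘ (vfOn A) ∘ (pullback h)) := by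
  constructor
  · intro A B ⟨e⟩
    funext x σ
    unfold vfOn
    rw [iso_sum A B e x σ A.d B.d e.comm_d, iso_sum A B e x σ A.u B.u e.comm_u]
  · intro h A
    funext x σ'
    simp only [Function.comp_apply, pushforward, vfOn, pushSF, pullback]
    rw [Finset.sum_sub_distrib]
    congr 1
    · exact fiber_sum_s18 A.d h σ' (fun f => A.φ f (fun l => x (h (A.s l.1))))
    · exact fiber_sum_s18 A.u h σ' (fun f => A.φ f (fun l => x (h (A.s l.1))))
end
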